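/- arXiv:2505.22403 — 2 statements merged into one kernel-verified Lean document; each statement's English description precedes it below -/
import Mathlib

section
/- Let S be any n×n matrix over ℤ[t,t⁻¹]. Form the (n+1)×(n+1) matrix J obtained from the block matrix with S in the top-left n×n corner padded by a last row (0,…,0,1) and last column (0,…,0,1)ᵀ (with 1 in the corner), and let Σ be the (n+1)×(n+1) matrix equal to the identity except that its bottom-right 2×2 block is [[1-t, t],[1, 0]]. Then det(J·Σ − I) = − det(S − I), where I denotes the identity matrix of the appropriate size. -/
open Matrix LaurentPolynomial

/-- Pad an `n × n` matrix with a last row `(0,…,0,1)` and last column `(0,…,0,1)ᵀ`. -/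
noncomputable def pad (n : ℕ) (S : Matrix (Fin n) (Fin n) (LaurentPolynomial ℤ)) :
    Matrix (Fin (n + 1)) (Fin (n + 1)) (LaurentPolynomial ℤ) :=
  Matrix.of fun i j =>
    if hi : (i : ℕ) < n then
      if hj : (j : ℕ) < n then S ⟨i, hi⟩ ⟨j, hj⟩ else 0
    else if (j : ℕ) < n then 0 else 1

/-- The `(n+1) × (n+1)` identity except the bottom-right `2 × 2` block is
`[[1-t, t], [1, 0]]` (requires `1 ≤ n`). -/
noncomputable def sigmaStab (n : ℕ) (hn : 1 ≤ n) :
    Matrix (Fin (n + 1)) (Fin (n + 1)) (LaurentPolynomial ℤ) :=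
  1 + single ⟨n - 1, by omega⟩ ⟨n - 1, by omega⟩ (-(T 1))
    + single ⟨n - 1, by omega⟩ ⟨n, by omega⟩ (T 1)
    + single ⟨n, by omega⟩ ⟨n - 1, by omega⟩ 1
    + single ⟨n, by omega⟩ ⟨n, by omega⟩ (-1)

/-! Adding the last column to column `n - 1` (right multiplication by a transvection, which has
determinant one) turns `J Σ - I` into a matrix whose last row is `(0, …, 0, -1)` and whose
top-left `n × n` block is `S - I`; expanding along the last row gives `-det (S - I)`. -/

section Stabilization

variable {ι R : Type*} [Fintype ι] [DecidableEq ι] [CommRing R]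

def stabMatrix (p q : ι) (t : R) : Matrix ι ι R :=
  1 + single p p (-t) + single p q t + single q p 1 + single q q (-1)

theorem stabMatrix_mul_transvection {p q : ι} (hpq : p ≠ q) (t : R) :
    stabMatrix p q t * transvection q p 1
      = 1 + single p q t + single q p 1 + single q q (-1) := by
  simp only [stabMatrix, transvection, mul_add, add_mul, mul_one, one_mul, ← single_neg, neg_mul,
    single_mul_single_same, single_mul_single_of_ne _ _ _ _ hpq]
  abel

theorem mul_single_eq_of_col_eq_one {A : Matrix ι ι R} {q : ι}
    (hA : ∀ i, A i q = (1 : Matrix ι ι R) i q) (j : ι) (c : R) :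
    A * single q j c = single q j c := by
  ext i k
  by_cases hk : k = j
  · subst hk
    rw [mul_single_apply_same, hA, one_apply]
    simp [single, eq_comm]
  · simp [hk, Ne.symm hk]

theorem mul_stabMatrix_sub_one_mul_transvection {A : Matrix ι ι R} {p q : ι} (hpq : p ≠ q)
    (hA : ∀ i, A i q = (1 : Matrix ι ι R) i q) (t : R) :
    (A * stabMatrix p q t - 1) * transvection q p 1
      = A - 1 + A * single p q t + single q q (-1) := by
  rw [sub_mul, mul_assoc, stabMatrix_mul_transvection hpq, one_mul, transvection]
  simp only [mul_add, mul_one, mul_single_eq_of_col_eq_one hA]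
  abel

end Stabilization

theorem det_succ_eq_mul_det_submatrix_castSucc {R : Type*} [CommRing R] {n : ℕ}
    (B : Matrix (Fin (n + 1)) (Fin (n + 1)) R) (hB : ∀ j : Fin n, B (Fin.last n) j.castSucc = 0) :
    B.det = B (Fin.last n) (Fin.last n) * (B.submatrix Fin.castSucc Fin.castSucc).det := by
  rw [det_succ_row B (Fin.last n), Fin.sum_univ_castSucc]
  simp [hB, Fin.succAbove_last]

theorem det_sub_one_add_mul_single_last {R : Type*} [CommRing R] {n : ℕ}
    {A : Matrix (Fin (n + 1)) (Fin (n + 1)) R}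
    (hA : ∀ j, A (Fin.last n) j = (1 : Matrix (Fin (n + 1)) (Fin (n + 1)) R) (Fin.last n) j)
    (p : Fin n) (t : R) :
    (A - 1 + A * single p.castSucc (Fin.last n) t + single (Fin.last n) (Fin.last n) (-1)).det
      = -(A.submatrix Fin.castSucc Fin.castSucc - 1).det := by
  have hp : p.castSucc ≠ Fin.last n := (Fin.castSucc_lt_last p).ne
  have hsub : (A - 1 + A * single p.castSucc (Fin.last n) t
      + single (Fin.last n) (Fin.last n) (-1)).submatrix Fin.castSucc Fin.castSucc
        = A.submatrix Fin.castSucc Fin.castSucc - 1 := by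
    ext i j
    simp [one_apply, (Fin.castSucc_lt_last j).ne,
      single_apply_of_row_ne (Fin.castSucc_lt_last i).ne']
  rw [det_succ_eq_mul_det_submatrix_castSucc, hsub]
  · simp [hA, one_apply_ne hp.symm]
  · intro j
    simp [hA, one_apply, (Fin.castSucc_lt_last j).ne, (Fin.castSucc_lt_last j).ne']

section Pad

variable (n : ℕ) (S : Matrix (Fin n) (Fin n) (LaurentPolynomial ℤ))

theorem pad_submatrix_castSucc : (pad n S).submatrix Fin.castSucc Fin.castSucc = S := by
  ext i j
  simp [pad]

theorem pad_apply_last (i : Fin (n + 1)) :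
    pad n S i (Fin.last n) = (1 : Matrix _ _ (LaurentPolynomial ℤ)) i (Fin.last n) := by
  have := i.isLt
  simp only [pad, of_apply, one_apply, Fin.ext_iff, Fin.val_last]
  split_ifs <;> first | rfl | omega

theorem pad_last_apply (j : Fin (n + 1)) :
    pad n S (Fin.last n) j = (1 : Matrix _ _ (LaurentPolynomial ℤ)) (Fin.last n) j := by
  have := j.isLt
  simp only [pad, of_apply, one_apply, Fin.ext_iff, Fin.val_last]
  split_ifs <;> first | rfl | omega

end Pad

theorem sigmaStab_eq_stabMatrix (n : ℕ) (hn : 1 ≤ n) :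
    sigmaStab n hn = stabMatrix (⟨n - 1, by omega⟩ : Fin n).castSucc (Fin.last n) (T 1) :=
  rfl

theorem stmt3 (n : ℕ) (hn : 1 ≤ n) (S : Matrix (Fin n) (Fin n) (LaurentPolynomial ℤ)) :
    (pad n S * sigmaStab n hn - 1).det = -(S - 1).det := by
  set p : Fin n := ⟨n - 1, by omega⟩
  have hpq : p.castSucc ≠ Fin.last n := (Fin.castSucc_lt_last p).ne
  calc (pad n S * sigmaStab n hn - 1).det
      = ((pad n S * sigmaStab n hn - 1) * transvection (Fin.last n) p.castSucc 1).det := by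
        rw [det_mul, det_transvection_of_ne _ _ hpq.symm, mul_one]
    _ = (pad n S - 1 + pad n S * single p.castSucc (Fin.last n) (T 1)
          + single (Fin.last n) (Fin.last n) (-1)).det := by
        rw [sigmaStab_eq_stabMatrix,
          mul_stabMatrix_sub_one_mul_transvection hpq (pad_apply_last n S)]
    _ = -(S - 1).det := by
        rw [det_sub_one_add_mul_single_last (pad_last_apply n S), pad_submatrix_castSucc]
end

section
/- For every integer k ≥ 1, the 2×2 Burau matrix B = [[1-t, t],[1, 0]] over ℤ[t,t⁻¹] satisfies: det(Bᵏ − I) = 0, and the ideal generated by the entries of Bᵏ − I equals the ideal generated by the polynomial 1 − t + t² − ⋯ + (−1)^{k−1} t^{k−1}. -/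
open Matrix LaurentPolynomial

noncomputable def burauBlock : Matrix (Fin 2) (Fin 2) (LaurentPolynomial ℤ) :=
  !![1 - T 1, T 1; 1, 0]

noncomputable def Mk (k : ℕ) : Matrix (Fin 2) (Fin 2) (LaurentPolynomial ℤ) :=
  burauBlock ^ k - 1

noncomputable def sAlt (k : ℕ) : LaurentPolynomial ℤ :=
  ∑ j ∈ Finset.range k, (-(T 1 : LaurentPolynomial ℤ)) ^ j

lemma sAlt_succ (k : ℕ) : sAlt (k + 1) = 1 - T 1 * sAlt k := by
  unfold sAlt
  rw [Finset.sum_range_succ', Finset.mul_sum,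
    Finset.sum_congr rfl
      (fun j _ => show T 1 * (-T 1 : LaurentPolynomial ℤ) ^ j = -((-T 1) ^ (j + 1)) by ring)]
  rw [Finset.sum_neg_distrib]
  ring

lemma eq_fin_two {a b c d e f g h : LaurentPolynomial ℤ}
    (h1 : a = e) (h2 : b = f) (h3 : c = g) (h4 : d = h) :
    !![a, b; c, d] = !![e, f; g, h] := by rw [h1, h2, h3, h4]

lemma sub_fin_two (a b c d e f g h : LaurentPolynomial ℤ) :
    !![a, b; c, d] - !![e, f; g, h] = !![a - e, b - f; c - g, d - h] := by
  refine Matrix.ext fun i j => ?_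
  fin_cases i <;> fin_cases j <;> simp

lemma burauBlock_pow (k : ℕ) :
    burauBlock ^ k = !![sAlt (k + 1), T 1 * sAlt k; sAlt k, 1 - sAlt k] := by
  induction k with
  | zero =>
    have h0 : sAlt 0 = 0 := by simp [sAlt]
    have h1 : sAlt 1 = 1 := by simp [sAlt]
    rw [pow_zero, h0, h1, Matrix.one_fin_two]
    exact eq_fin_two rfl (by ring) rfl (by ring)
  | succ k ih =>
    rw [pow_succ', ih]
    have h1 := sAlt_succ k
    have h2 := sAlt_succ (k + 1)
    rw [burauBlock, Matrix.mul_fin_two]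
    exact eq_fin_two (by linear_combination h1 - h2)
      (by linear_combination (-(T 1)) * h1) (by ring)
      (by linear_combination h1)

lemma Mk_eq (k : ℕ) :
    Mk k = !![-(T 1) * sAlt k, T 1 * sAlt k; sAlt k, -sAlt k] := by
  have h1 := sAlt_succ k
  rw [Mk, burauBlock_pow, Matrix.one_fin_two, sub_fin_two]
  exact eq_fin_two (by linear_combination h1) (by ring) (by ring)
    (by ring)

theorem stmt8 (k : ℕ) (hk : 1 ≤ k) :
    (Mk k).det = 0 ∧
    Ideal.span {Mk k 0 0, Mk k 0 1, Mk k 1 0, Mk k 1 1}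
      = Ideal.span {∑ j ∈ Finset.range k, (-(T 1 : LaurentPolynomial ℤ)) ^ j} := by
  have hM := Mk_eq k
  have e00 : Mk k 0 0 = -(T 1) * sAlt k := by rw [hM]; simp
  have e01 : Mk k 0 1 = T 1 * sAlt k := by rw [hM]; simp
  have e10 : Mk k 1 0 = sAlt k := by rw [hM]; simp
  have e11 : Mk k 1 1 = -sAlt k := by rw [hM]; simp
  have hs : (∑ j ∈ Finset.range k, (-(T 1 : LaurentPolynomial ℤ)) ^ j) = sAlt k := rfl
  constructor
  · rw [Matrix.det_fin_two, e00, e01, e10, e11]; ring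
  · rw [e00, e01, e10, e11, hs]
    apply le_antisymm
    · rw [Ideal.span_le]
      intro x hx
      simp only [Set.mem_insert_iff, Set.mem_singleton_iff] at hx
      rcases hx with rfl | rfl | rfl | rfl <;>
          rw [SetLike.mem_coe, Ideal.mem_span_singleton] <;>
        first
          | exact dvd_mul_left _ _
          | exact dvd_refl _
          | exact dvd_neg.mpr (dvd_refl _)
    · rw [Ideal.span_le]
      intro x hx
      simp only [Set.mem_singleton_iff] at hx
      subst hx
      apply Ideal.subset_span
      simp
end
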